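/- Soundness of ≅: let (W, ▷) be a well-founded frame and fix a syntactical λ-algebra (V, ·, ⟦ ⟧). If A ≅ B, then I(A)^η_p = I(B)^η_p for every hereditary type environment η and every world p ∈ W. -/

import Mathlib

namespace LambdaA

/-! ### Type expressions (de Bruijn representation for `μ`-binders) -/

inductive Ty : Type
  | var : ℕ → Ty
  | arrow : Ty → Ty → Ty
  | box : Ty → Ty
  | mu : Ty → Ty
  deriving DecidableEq

namespace Ty

def rename : (ℕ → ℕ) → Ty → Ty
  | f, var n => var (f n)
  | f, arrow A B => arrow (rename f A) (rename f B)
  | f, box A => box (rename f A)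
  | f, mu A => mu (rename (fun n => match n with | 0 => 0 | Nat.succ m => f m + 1) A)

def shiftUp : Ty → Ty := rename Nat.succ

def subst : (ℕ → Ty) → Ty → Ty
  | σ, var n => σ n
  | σ, arrow A B => arrow (subst σ A) (subst σ B)
  | σ, box A => box (subst σ A)
  | σ, mu A => mu (subst (fun n => match n with | 0 => var 0 | Nat.succ m => shiftUp (σ m)) A)

end Ty

/-- `openT A B`: instantiate the outermost bound variable (index `0`) of the body `A` by `B`. -/
def openT (A B : Ty) : Ty :=
  Ty.subst (fun n => match n with | 0 => B | Nat.succ m => Ty.var m) A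

/-- `substFree A X B` is the capture-avoiding substitution `A[B/X]` for the free variable `X`. -/
def substFree (A : Ty) (X : ℕ) (B : Ty) : Ty :=
  Ty.subst (fun n => if n = X then B else Ty.var n) A

/-- The unfolding `μX.A ↦ A[μX.A/X]` of a recursive type. -/
def unfoldMu (A : Ty) : Ty := openT A (Ty.mu A)

/-- Free occurrence of a type variable in a type expression. -/
def freeInTy : ℕ → Ty → Prop
  | X, .var n => n = X
  | X, .arrow A B => freeInTy X A ∨ freeInTy X B
  | X, .box A => freeInTy X A
  | X, .mu A => freeInTy (X + 1) A

/-- Auxiliary ⊤-variant test.  `tvAux A d t` scans the tail of `A`, where `d` is the number of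
`μ`-binders passed so far and `t` is the number of (outermost) such binders inside which a `•`
has already been encountered.  A variable qualifies iff it is bound by one of the `μ`-binders
and at least one `•` occurs inside that binder. -/
def tvAux : Ty → ℕ → ℕ → Bool
  | .var j, d, t => decide (d - t ≤ j ∧ j < d)
  | .box A, d, _ => tvAux A d d
  | .mu A, d, t => tvAux A (d + 1) t
  | .arrow _ B, d, t => tvAux B d t

/-- `A` is a ⊤-variant. -/
def IsTV (A : Ty) : Prop := tvAux A 0 0 = true

/-- `Proper A X` : the type expression `A` is proper in the (free) variable `X`. -/
def Proper : Ty → ℕ → Prop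
  | .var n, X => n ≠ X
  | .box _, _ => True
  | .arrow A B, X => (Proper A X ∧ Proper B X) ∨ IsTV B
  | .mu A, X => Proper A (X + 1) ∨ IsTV (.mu A)

/-- Well-formed type expressions: every recursive type `μX.A` has `A` proper in `X`. -/
def WF : Ty → Prop
  | .var _ => True
  | .arrow A B => WF A ∧ WF B
  | .box A => WF A
  | .mu A => WF A ∧ Proper A 0

/-- `⊤ = μX.•X`. -/
def tyTop : Ty := .mu (.box (.var 0))

/-- `•ⁿ A`. -/
def boxN (n : ℕ) (A : Ty) : Ty := Ty.box^[n] A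

/-- The equivalences `≅` (`s = false`) and `≃` (`s = true`) on type expressions. -/
inductive TyEq : Bool → Ty → Ty → Prop
  | refl (s : Bool) (A : Ty) : TyEq s A A
  | symm {s : Bool} {A B : Ty} : TyEq s A B → TyEq s B A
  | trans {s : Bool} {A B C : Ty} : TyEq s A B → TyEq s B C → TyEq s A C
  | boxCongr {s : Bool} {A B : Ty} : TyEq s A B → TyEq s (.box A) (.box B)
  | arrowCongr {s : Bool} {A B C D : Ty} :
      TyEq s A C → TyEq s B D → TyEq s (.arrow A B) (.arrow C D)
  | arrowTop (s : Bool) (A : Ty) : TyEq s (.arrow A tyTop) tyTop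
  | fix (s : Bool) (A : Ty) : TyEq s (.mu A) (unfoldMu A)
  | uniq {s : Bool} {A C : Ty} : TyEq s A (openT C A) → Proper C 0 → TyEq s A (.mu C)
  | kl (A B : Ty) : TyEq true (.box (.arrow A B)) (.arrow (.box A) (.box B))

/-! ### Subtyping -/

/-- Subtyping assumptions: finite sets of pairs of type variables. -/
abbrev Assum := Finset (ℕ × ℕ)

/-- Well-formedness of a subtyping assumption: every type variable occurs at most once. -/
def AssumOK (γ : Assum) : Prop :=
  (∀ p ∈ γ, (p : ℕ × ℕ).1 ≠ p.2) ∧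
    ∀ p ∈ γ, ∀ q ∈ γ, p ≠ q →
      (p : ℕ × ℕ).1 ≠ (q : ℕ × ℕ).1 ∧ p.1 ≠ q.2 ∧ p.2 ≠ q.1 ∧ p.2 ≠ q.2

/-- `X` occurs in the subtyping assumption `γ`. -/
def AssumVar (γ : Assum) (X : ℕ) : Prop :=
  ∃ p ∈ γ, (p : ℕ × ℕ).1 = X ∨ (p : ℕ × ℕ).2 = X

/-- Derivability of subtyping judgments `γ ⊢ A ⪯ B`. -/
inductive Sub : Assum → Ty → Ty → Prop
  | assump {γ : Assum} {X Y : ℕ} : AssumOK γ → (X, Y) ∈ γ → Sub γ (.var X) (.var Y)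
  | top {γ : Assum} (A : Ty) : AssumOK γ → Sub γ A tyTop
  | refl {γ : Assum} {A B : Ty} : AssumOK γ → TyEq true A B → Sub γ A B
  | trans {γ₁ γ₂ : Assum} {A B C : Ty} :
      Sub γ₁ A B → Sub γ₂ B C → AssumOK (γ₁ ∪ γ₂) → Sub (γ₁ ∪ γ₂) A C
  | boxMono {γ : Assum} {A B : Ty} : Sub γ A B → Sub γ (.box A) (.box B)
  | arrowMono {γ₁ γ₂ : Assum} {A A' B B' : Ty} :
      Sub γ₁ A' A → Sub γ₂ B B' → AssumOK (γ₁ ∪ γ₂) →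
      Sub (γ₁ ∪ γ₂) (.arrow A B) (.arrow A' B')
  | muMono {γ : Assum} {X Y : ℕ} {A B : Ty} :
      AssumOK (insert (X, Y) γ) →
      Sub (insert (X, Y) γ) (openT A (.var X)) (openT B (.var Y)) →
      ¬ AssumVar γ X → ¬ AssumVar γ Y →
      ¬ freeInTy X (openT B (.var Y)) → ¬ freeInTy Y (openT A (.var X)) →
      Proper (openT A (.var X)) X → Proper (openT B (.var Y)) Y →
      Sub γ (.mu A) (.mu B)
  | approx {γ : Assum} (A : Ty) : AssumOK γ → Sub γ A (.box A)

/-! ### Untyped λ-terms (locally-nameless representation) -/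

inductive Tm : Type
  | bvar : ℕ → Tm
  | fvar : ℕ → Tm
  | lam : Tm → Tm
  | app : Tm → Tm → Tm
  deriving DecidableEq

def openTmAux (N : Tm) : ℕ → Tm → Tm
  | _, .fvar y => .fvar y
  | k, .bvar i => if i = k then N else .bvar i
  | k, .lam M => .lam (openTmAux N (k + 1) M)
  | k, .app M₁ M₂ => .app (openTmAux N k M₁) (openTmAux N k M₂)

/-- Instantiate the outermost bound variable of the body `M` by `N`. -/
def openTm (M N : Tm) : Tm := openTmAux N 0 M

/-- `substTm M x N` is the substitution `M[N/x]` for the free variable `x`. -/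
def substTm : Tm → ℕ → Tm → Tm
  | .bvar i, _, _ => .bvar i
  | .fvar y, x, N => if y = x then N else .fvar y
  | .lam M, x, N => .lam (substTm M x N)
  | .app M₁ M₂, x, N => .app (substTm M₁ x N) (substTm M₂ x N)

/-- Free occurrence of an individual variable in a λ-term. -/
def freeTm : ℕ → Tm → Prop
  | _, .bvar _ => False
  | x, .fvar y => y = x
  | x, .lam M => freeTm x M
  | x, .app M₁ M₂ => freeTm x M₁ ∨ freeTm x M₂

/-- One-step β-reduction. -/
inductive Step : Tm → Tm → Prop
  | beta (M N : Tm) : Step (.app (.lam M) N) (openTm M N)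
  | appL {M M' : Tm} (N : Tm) : Step M M' → Step (.app M N) (.app M' N)
  | appR (M : Tm) {N N' : Tm} : Step N N' → Step (.app M N) (.app M N')
  | lamCongr {M M' : Tm} : Step M M' → Step (.lam M) (.lam M')

/-- `→*β`, the reflexive-transitive closure of β-reduction. -/
def Steps : Tm → Tm → Prop := Relation.ReflTransGen Step

/-- β-convertibility `=β`. -/
inductive BetaEq : Tm → Tm → Prop
  | step {M N : Tm} : Step M N → BetaEq M N
  | refl (M : Tm) : BetaEq M M
  | symm {M N : Tm} : BetaEq M N → BetaEq N M
  | trans {M N K : Tm} : BetaEq M N → BetaEq N K → BetaEq M K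

/-! ### Typing -/

/-- Typing contexts: finite sets of (variable, type) pairs. -/
abbrev Ctx := Finset (ℕ × Ty)

/-- Well-formedness of a typing context (functionality). -/
def CtxOK (Γ : Ctx) : Prop :=
  ∀ p ∈ Γ, ∀ q ∈ Γ, (p : ℕ × Ty).1 = (q : ℕ × Ty).1 → p = q

/-- `•Γ`. -/
def boxCtx (Γ : Ctx) : Ctx := Γ.image fun p => (p.1, Ty.box p.2)

/-- All types in the context are well-formed type expressions. -/
def CtxWF (Γ : Ctx) : Prop := ∀ p ∈ Γ, WF (p : ℕ × Ty).2

/-- The typing system λA. -/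
inductive Typing : Ctx → Tm → Ty → Prop
  | var {Γ : Ctx} {x : ℕ} {A : Ty} : CtxOK Γ → (x, A) ∈ Γ → Typing Γ (.fvar x) A
  | shift {Γ : Ctx} {M : Tm} {A : Ty} : Typing (boxCtx Γ) M (.box A) → Typing Γ M A
  | top {Γ : Ctx} (M : Tm) : CtxOK Γ → Typing Γ M tyTop
  | sub {Γ : Ctx} {M : Tm} {A B : Ty} : Typing Γ M A → Sub ∅ A B → Typing Γ M B
  | lamI {Γ : Ctx} {x : ℕ} {A B : Ty} {M : Tm} :
      ¬ freeTm x M →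
      Typing (insert (x, A) Γ) (openTm M (.fvar x)) B →
      Typing Γ (.lam M) (.arrow A B)
  | appE {Γ₁ Γ₂ : Ctx} {M N : Tm} {A B : Ty} :
      Typing Γ₁ M (.arrow A B) → Typing Γ₂ N A → CtxOK (Γ₁ ∪ Γ₂) →
      Typing (Γ₁ ∪ Γ₂) (.app M N) B

/-! ### Frames, λ-algebras and the semantics of types -/

/-- The accessibility relation is conversely well-founded. -/
def ConverselyWF {W : Type*} (acc : W → W → Prop) : Prop :=
  WellFounded fun q p => acc p q

/-- Local linearity of the accessibility relation. -/
def LocallyLinear {W : Type*} (acc : W → W → Prop) : Prop :=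
  ∀ p q, acc p q → ∃ r, Relation.ReflTransGen acc p r ∧ acc r q ∧
    ∀ s, acc r s → Relation.ReflTransGen acc q s

/-- Hereditary type environments. -/
def Hereditary {W : Type*} {V : Type*} (acc : W → W → Prop) (η : ℕ → W → Set V) : Prop :=
  ∀ X p q, acc p q → η X p ⊆ η X q

/-- Syntactical λ-algebras of the untyped λ-calculus. -/
structure LambdaAlgebra (V : Type*) where
  nonempty : Nonempty V
  ap : V → V → V
  den : Tm → (ℕ → V) → V
  den_fvar : ∀ x ρ, den (.fvar x) ρ = ρ x
  den_app : ∀ M N ρ, den (.app M N) ρ = ap (den M ρ) (den N ρ)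
  den_lam : ∀ M x ρ v, ¬ freeTm x M →
    ap (den (.lam M) ρ) v = den (openTm M (.fvar x)) (Function.update ρ x v)
  den_ext : ∀ M ρ ρ', (∀ x, freeTm x M → ρ x = ρ' x) → den M ρ = den M ρ'
  den_beta : ∀ M N ρ, BetaEq M N → den M ρ = den N ρ

/-- The interpretation `I(A)^η_p` of type expressions over a frame, packaged together with
its defining (recursion) equations. -/
structure Interp (W : Type*) (acc : W → W → Prop) (V : Type*) (ap : V → V → V) where
  I : Ty → (ℕ → W → Set V) → W → Set V
  I_tv : ∀ A η p, WF A → IsTV A → I A η p = Set.univ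
  I_var : ∀ X η p, I (.var X) η p = η X p
  I_box : ∀ A η p, WF A → ¬ IsTV (Ty.box A) →
    I (.box A) η p = {u | ∀ q, acc p q → u ∈ I A η q}
  I_arrow : ∀ A B η p, WF A → WF B → ¬ IsTV (Ty.arrow A B) →
    I (.arrow A B) η p =
      {u | ∀ q, Relation.ReflTransGen acc p q → ∀ v ∈ I A η q, ap u v ∈ I B η q}
  I_mu : ∀ A η p, WF (Ty.mu A) → ¬ IsTV (Ty.mu A) →
    I (.mu A) η p = I (unfoldMu A) η p

/-! ### Tail finiteness and related notions -/

/-- The sets `TF^V`. -/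
inductive TFmem : Set ℕ → Ty → Prop
  | var {V : Set ℕ} {X : ℕ} : X ∉ V → TFmem V (.var X)
  | box {V : Set ℕ} {A : Ty} : TFmem V A → TFmem V (.box A)
  | arrow {V : Set ℕ} (A : Ty) {B : Ty} : TFmem V B → TFmem V (.arrow A B)
  | mu {V : Set ℕ} {A : Ty} : WF (.mu A) → TFmem ({0} ∪ (Nat.succ '' V)) A → TFmem V (.mu A)

/-- Shapes `•^{m₀}(B₁ → •^{m₁}(B₂ → ⋯ → •^{m_{n-1}}(Bₙ → •^{mₙ} X)⋯))`. -/
inductive TFShape : Ty → Prop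
  | var (X : ℕ) : TFShape (.var X)
  | box {A : Ty} : TFShape A → TFShape (.box A)
  | arrow (A : Ty) {B : Ty} : TFShape B → TFShape (.arrow A B)

/-- Tail finite type expressions. -/
def TailFinite (A : Ty) : Prop := ∃ C, TFShape C ∧ WF C ∧ TyEq false A C

-- Effectively occurring type variables, positively (`petv`) and negatively (`netv`).
mutual
  def petv : Ty → Finset ℕ
    | .var X => {X}
    | .box A => if tvAux (.box A) 0 0 then ∅ else petv A
    | .arrow A B => if tvAux (.arrow A B) 0 0 then ∅ else netv A ∪ petv B
    | .mu A =>
        if tvAux (.mu A) 0 0 then ∅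
        else if 0 ∈ netv A then ((petv A ∪ netv A).erase 0).image (· - 1)
        else ((petv A).erase 0).image (· - 1)
  def netv : Ty → Finset ℕ
    | .var _ => ∅
    | .box A => if tvAux (.box A) 0 0 then ∅ else netv A
    | .arrow A B => if tvAux (.arrow A B) 0 0 then ∅ else petv A ∪ netv B
    | .mu A =>
        if tvAux (.mu A) 0 0 then ∅
        else if 0 ∈ netv A then ((netv A ∪ petv A).erase 0).image (· - 1)
        else ((netv A).erase 0).image (· - 1)
end

/-- Positively finite type expressions. -/
def PosFin (A : Ty) : Prop :=
  ∀ (s : Bool) (B C : Ty) (X : ℕ), WF B → WF C →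
    TyEq s A (substFree B X C) → X ∈ petv B → X ∉ netv B → TailFinite C

/-- Negatively finite type expressions. -/
def NegFin (A : Ty) : Prop :=
  ∀ (s : Bool) (B C : Ty) (X : ℕ), WF B → WF C →
    TyEq s A (substFree B X C) → X ∈ netv B → X ∉ petv B → TailFinite C

/-! ### Head normal forms, maximality, normal forms -/

/-- `y N₁ … Nₙ` with every argument satisfying `P`. -/
inductive SpineArgs (P : Tm → Prop) : Tm → Prop
  | fvar (x : ℕ) : SpineArgs P (.fvar x)
  | bvar (i : ℕ) : SpineArgs P (.bvar i)
  | app {M N : Tm} : SpineArgs P M → P N → SpineArgs P (.app M N)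

/-- Head normal forms `λx₁…λxₘ. y N₁ … Nₙ` whose arguments satisfy `P`. -/
inductive HNFP (P : Tm → Prop) : Tm → Prop
  | spine {M : Tm} : SpineArgs P M → HNFP P M
  | lam {M : Tm} : HNFP P M → HNFP P (.lam M)

/-- Head normal forms. -/
def HNF : Tm → Prop := HNFP fun _ => True

/-- Maximality at a given depth. -/
def MaxAt : ℕ → Tm → Prop
  | 0, _ => True
  | n + 1, M => ∃ M', Steps M M' ∧ HNFP (MaxAt n) M'

/-- Maximal λ-terms: the Böhm tree contains no `⊥`. -/
def Maximal (M : Tm) : Prop := ∀ n, MaxAt n M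

/-- β-normal forms. -/
def NormalForm (M : Tm) : Prop := ∀ N, ¬ Step M N

/-- Type expressions without any occurrence of the modal operator `•`. -/
def NoBox : Ty → Prop
  | .var _ => True
  | .arrow A B => NoBox A ∧ NoBox B
  | .box _ => False
  | .mu A => NoBox A

/-! ### The modal logic LAμ and its Kripke semantics -/

/-- The logic LAμ (formulae are type expressions). -/
inductive LAmu : Finset Ty → Ty → Prop
  | assump {Γ : Finset Ty} {A : Ty} : LAmu (insert A Γ) A
  | nec {Γ₁ : Finset Ty} (Γ₂ : Finset Ty) {A : Ty} :
      LAmu Γ₁ A → LAmu (Γ₁.image Ty.box ∪ Γ₂) (.box A)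
  | four {Γ : Finset Ty} {A : Ty} : LAmu Γ (.box A) → LAmu Γ (.box (.box A))
  | impI {Γ : Finset Ty} {A B : Ty} : LAmu (insert A Γ) B → LAmu Γ (.arrow A B)
  | impE {Γ₁ Γ₂ : Finset Ty} {A B : Ty} :
      LAmu Γ₁ (.arrow A B) → LAmu Γ₂ A → LAmu (Γ₁ ∪ Γ₂) B
  | fold {Γ : Finset Ty} {A : Ty} : LAmu Γ (unfoldMu A) → LAmu Γ (.mu A)
  | unfold {Γ : Finset Ty} {A : Ty} : LAmu Γ (.mu A) → LAmu Γ (unfoldMu A)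
  | lrule {Γ : Finset Ty} {A B : Ty} :
      LAmu Γ (.arrow (.box A) (.box B)) → LAmu Γ (.box (.arrow A B))
  | approx {Γ : Finset Ty} {A : Ty} : LAmu Γ A → LAmu Γ (.box A)

/-- The Kripke satisfaction relation over an LA-frame `(W, tri, R)` under a valuation `ξ`,
packaged with its defining (recursion) equations. -/
structure SatFun {W : Type*} (tri R : W → W → Prop) (ξ : ℕ → W → Prop) where
  sat : Ty → W → Prop
  sat_tv : ∀ A p, WF A → IsTV A → sat A p
  sat_var : ∀ X p, sat (.var X) p ↔ ξ X p
  sat_box : ∀ A p, WF A → ¬ IsTV (Ty.box A) →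
    (sat (.box A) p ↔ ∀ q, tri p q → sat A q)
  sat_arrow : ∀ A B p, WF A → WF B → ¬ IsTV (Ty.arrow A B) →
    (sat (.arrow A B) p ↔ ∀ q, R p q → sat A q → sat B q)
  sat_mu : ∀ A p, WF (Ty.mu A) → ¬ IsTV (Ty.mu A) →
    (sat (.mu A) p ↔ sat (unfoldMu A) p)

/-!
Read a type as the regular tree of its unfoldings, with every ⊤-variant subtree collapsed to a
leaf `⊤`; `Bisim n` compares two such trees up to depth `n`. Every rule of `≅` preserves this
tree together with the shape of the tail, i.e. its end and the number of bullets on it. The tail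
shape is what the uniqueness rule needs: if `A ≅ C[A/X]` and the tail of `C` is `•ᵏ⁺¹X`, then
`μX.C` is a ⊤-variant, and counting bullets shows that so is `A`. Otherwise `X` is not the head
of `C`, and `A` and `μX.C` agree up to every depth by induction on the depth.

Conversely, the interpretation of a well-formed type depends only on its tree. This goes by
well-founded induction on the world and, at a fixed world, on the depth of the types above their
bullets: only `•` moves to a later world, and unfolding a `μ` with a proper body lowers that depth.
-/

def scons {α : Type*} (a : α) (f : ℕ → α) : ℕ → α
  | 0 => a
  | m + 1 => f m

namespace Ty

def upRen (f : ℕ → ℕ) : ℕ → ℕ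
  | 0 => 0
  | m + 1 => f m + 1

theorem rename_mu (f : ℕ → ℕ) (A : Ty) : rename f (mu A) = mu (rename (upRen f) A) := rfl

theorem subst_mu (σ : ℕ → Ty) (A : Ty) :
    subst σ (mu A) = mu (subst (scons (var 0) (shiftUp ∘ σ)) A) := rfl

theorem rename_rename (f g : ℕ → ℕ) (A : Ty) : rename f (rename g A) = rename (f ∘ g) A := by
  induction A generalizing f g with
  | var n => rfl
  | arrow A B ihA ihB => simp only [rename, ihA, ihB]
  | box A ih => simp only [rename, ih]
  | mu A ih =>
    simp only [rename_mu, ih]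
    congr 2
    funext n; cases n <;> rfl

theorem subst_rename (σ : ℕ → Ty) (f : ℕ → ℕ) (A : Ty) :
    subst σ (rename f A) = subst (σ ∘ f) A := by
  induction A generalizing σ f with
  | var n => rfl
  | arrow A B ihA ihB => simp only [rename, subst, ihA, ihB]
  | box A ih => simp only [rename, subst, ih]
  | mu A ih =>
    simp only [rename_mu, subst_mu, ih]
    congr 2
    funext n; cases n <;> rfl

theorem rename_subst (f : ℕ → ℕ) (σ : ℕ → Ty) (A : Ty) :
    rename f (subst σ A) = subst (rename f ∘ σ) A := by
  induction A generalizing f σ with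
  | var n => rfl
  | arrow A B ihA ihB => simp only [rename, subst, ihA, ihB]
  | box A ih => simp only [rename, subst, ih]
  | mu A ih =>
    simp only [rename_mu, subst_mu, ih]
    congr 2
    funext n
    cases n with
    | zero => rfl
    | succ m => simp only [Function.comp, scons, shiftUp, rename_rename]; rfl

theorem subst_subst (σ τ : ℕ → Ty) (A : Ty) :
    subst σ (subst τ A) = subst (subst σ ∘ τ) A := by
  induction A generalizing σ τ with
  | var n => rfl
  | arrow A B ihA ihB => simp only [subst, ihA, ihB]
  | box A ih => simp only [subst, ih]
  | mu A ih =>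
    simp only [subst_mu, ih]
    congr 2
    funext n
    cases n with
    | zero => rfl
    | succ m => simp only [Function.comp, scons, shiftUp, subst_rename, rename_subst]; rfl

theorem subst_var (A : Ty) : subst var A = A := by
  induction A with
  | var n => rfl
  | arrow A B ihA ihB => simp only [subst, ihA, ihB]
  | box A ih => simp only [subst, ih]
  | mu A ih =>
    have hvar : scons (var 0) (shiftUp ∘ var) = var := by funext n; cases n <;> rfl
    rw [subst_mu, hvar, ih]

end Ty

theorem openT_eq (A B : Ty) : openT A B = Ty.subst (scons B Ty.var) A := rfl

theorem unfoldMu_eq (A : Ty) : unfoldMu A = Ty.subst (scons (.mu A) Ty.var) A := rfl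

theorem unfoldMu_subst (σ : ℕ → Ty) (C : Ty) :
    unfoldMu (Ty.subst (scons (.var 0) (Ty.shiftUp ∘ σ)) C) =
      Ty.subst (scons (Ty.subst σ (.mu C)) σ) C := by
  rw [unfoldMu_eq, Ty.subst_subst]
  congr 1
  funext n
  cases n with
  | zero => rfl
  | succ m =>
    simp only [Function.comp, scons, Ty.shiftUp, Ty.subst_rename]
    exact Ty.subst_var (σ m)

/-- The tail of a type as far as the semantics sees it: `top` for a ⊤-variant, otherwise the
number `k` of bullets on the tail together with its end, either the free variable `j`
(`var j k`) or a `μ`-bound variable with no bullet inside its binder (`loop k`). -/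
inductive TailShape : Type
  | top
  | loop (k : ℕ)
  | var (j k : ℕ)
  deriving DecidableEq

namespace TailShape

def addBullets (m : ℕ) : TailShape → TailShape
  | top => top
  | loop k => loop (k + m)
  | var j k => var j (k + m)

def map (f : ℕ → ℕ) : TailShape → TailShape
  | var j k => var (f j) k
  | t => t

def bind : TailShape → (ℕ → TailShape) → TailShape
  | var j k, g => (g j).addBullets k
  | t, _ => t

def closeMu : TailShape → TailShape
  | var 0 0 => loop 0
  | var 0 (_ + 1) => top
  | var (j + 1) k => var j k
  | t => t

@[simp] theorem addBullets_zero (t : TailShape) : t.addBullets 0 = t := by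
  cases t <;> rfl

@[simp] theorem addBullets_eq_top {m : ℕ} {t : TailShape} : t.addBullets m = top ↔ t = top := by
  cases t <;> simp [addBullets]

theorem eq_top_of_addBullets_eq {k : ℕ} {t : TailShape} (h : t.addBullets (k + 1) = t) :
    t = top := by
  cases t <;> simp [addBullets] at h ⊢

@[simp] theorem map_eq_top {f : ℕ → ℕ} {t : TailShape} : t.map f = top ↔ t = top := by
  cases t <;> simp [map]

theorem addBullets_addBullets (k m : ℕ) (t : TailShape) :
    (t.addBullets k).addBullets m = t.addBullets (k + m) := by
  cases t <;> simp [addBullets, Nat.add_assoc]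

theorem bind_addBullets (m : ℕ) (t : TailShape) (g : ℕ → TailShape) :
    (t.addBullets m).bind g = (t.bind g).addBullets m := by
  cases t with
  | var j k => exact (addBullets_addBullets k m (g j)).symm
  | _ => rfl

theorem closeMu_map_upRen (f : ℕ → ℕ) (t : TailShape) :
    (t.map (Ty.upRen f)).closeMu = t.closeMu.map f := by
  rcases t with _ | _ | ⟨_ | j, _ | k⟩ <;> rfl

theorem closeMu_bind (t : TailShape) (g : ℕ → TailShape) :
    (t.bind (scons (var 0 0) (map Nat.succ ∘ g))).closeMu = t.closeMu.bind g := by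
  rcases t with _ | _ | ⟨_ | j, _ | k⟩
  all_goals try rfl
  all_goals rcases h : g j <;> simp [bind, addBullets, closeMu, map, scons, h]

theorem bind_eq_top_congr {g h : ℕ → TailShape} (hgh : ∀ j, g j = top ↔ h j = top)
    (t : TailShape) : t.bind g = top ↔ t.bind h = top := by
  cases t with
  | var j k => simpa [bind] using hgh j
  | _ => rfl

end TailShape

def tailShape : Ty → TailShape
  | .var j => .var j 0
  | .box A => (tailShape A).addBullets 1
  | .arrow _ B => tailShape B
  | .mu A => (tailShape A).closeMu

theorem tailShape_rename (f : ℕ → ℕ) (A : Ty) :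
    tailShape (Ty.rename f A) = (tailShape A).map f := by
  induction A generalizing f with
  | var n => rfl
  | arrow A B _ ihB => exact ihB f
  | box A ih =>
    simp only [Ty.rename, tailShape, ih]
    cases tailShape A <;> rfl
  | mu A ih =>
    simp only [Ty.rename_mu, tailShape, ih, TailShape.closeMu_map_upRen]

theorem tailShape_subst (σ : ℕ → Ty) (A : Ty) :
    tailShape (Ty.subst σ A) = (tailShape A).bind (tailShape ∘ σ) := by
  induction A generalizing σ with
  | var n => exact (TailShape.addBullets_zero _).symm
  | arrow A B _ ihB => exact ihB σ
  | box A ih => simp only [Ty.subst, tailShape, ih, TailShape.bind_addBullets]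
  | mu A ih =>
    simp only [Ty.subst_mu, tailShape, ih, ← TailShape.closeMu_bind]
    congr 2
    funext n
    cases n with
    | zero => rfl
    | succ m => exact tailShape_rename _ _

theorem tailShape_unfoldMu (A : Ty) : tailShape (unfoldMu A) = tailShape (.mu A) := by
  rw [unfoldMu_eq, tailShape_subst, tailShape]
  rcases h : tailShape A with _ | _ | ⟨_ | j, _ | k⟩
  all_goals simp [TailShape.bind, TailShape.closeMu, TailShape.addBullets, scons, tailShape, h]

theorem tailShape_subst_eq_top_congr {σ τ : ℕ → Ty}
    (h : ∀ j, tailShape (σ j) = .top ↔ tailShape (τ j) = .top) (C : Ty) :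
    tailShape (Ty.subst σ C) = .top ↔ tailShape (Ty.subst τ C) = .top := by
  rw [tailShape_subst, tailShape_subst]
  exact TailShape.bind_eq_top_congr h _

theorem tailShape_subst_of_eq_top (σ : ℕ → Ty) {C : Ty} (h : tailShape C = .top) :
    tailShape (Ty.subst σ C) = .top := by
  rw [tailShape_subst, h]; rfl

theorem tvAux_iff (A : Ty) {d t : ℕ} (htd : t ≤ d) :
    tvAux A d t = true ↔ tailShape A = .top ∨
      ∃ j k, tailShape A = .var j k ∧ j < d ∧ (0 < k ∨ d - t ≤ j) := by
  induction A generalizing d t with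
  | var n => simp [tvAux, tailShape, and_comm]
  | arrow A B _ ihB => exact ihB htd
  | box A ih =>
    rw [tvAux, ih le_rfl, tailShape]
    rcases tailShape A with _ | _ | ⟨j, k⟩ <;> simp [TailShape.addBullets]
  | mu A ih =>
    rw [tvAux, ih (by omega), tailShape]
    rcases tailShape A with _ | _ | ⟨_ | j, _ | k⟩ <;> simp [TailShape.closeMu] <;> omega

theorem isTV_iff (A : Ty) : IsTV A ↔ tailShape A = .top := by
  rw [IsTV, tvAux_iff A le_rfl]
  simp

def Unguarded : ℕ → Ty → Prop
  | x, .var j => j = x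
  | _, .box _ => False
  | x, .arrow A B => tailShape B ≠ .top ∧ (Unguarded x A ∨ Unguarded x B)
  | x, .mu A => tailShape (.mu A) ≠ .top ∧ Unguarded (x + 1) A

theorem proper_iff_not_unguarded (A : Ty) (x : ℕ) : Proper A x ↔ ¬ Unguarded x A := by
  induction A generalizing x with
  | var n => simp [Proper, Unguarded]
  | box A _ => simp [Proper, Unguarded]
  | arrow A B ihA ihB =>
    rw [Proper, Unguarded, isTV_iff, ihA, ihB]
    tauto
  | mu A ih =>
    rw [Proper, Unguarded, isTV_iff, ih]
    tauto

theorem Unguarded.of_rename {f : ℕ → ℕ} {A : Ty} {x : ℕ} (h : Unguarded x (Ty.rename f A)) :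
    ∃ z, f z = x ∧ Unguarded z A := by
  induction A generalizing f x with
  | var n => exact ⟨n, h, rfl⟩
  | box A _ => exact h.elim
  | arrow A B ihA ihB =>
    obtain ⟨htop, hA | hB⟩ := h
    · obtain ⟨z, rfl, hz⟩ := ihA hA
      exact ⟨z, rfl, by simpa [tailShape_rename] using htop, Or.inl hz⟩
    · obtain ⟨z, rfl, hz⟩ := ihB hB
      exact ⟨z, rfl, by simpa [tailShape_rename] using htop, Or.inr hz⟩
  | mu A ih =>
    obtain ⟨htop, hA⟩ := h
    replace htop : tailShape (Ty.rename f (.mu A)) ≠ .top := htop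
    obtain ⟨_ | z, hz, hu⟩ := ih hA
    · simp at hz
    · refine ⟨z, by simpa using hz, ?_, hu⟩
      rwa [tailShape_rename, ne_eq, TailShape.map_eq_top] at htop

theorem Unguarded.of_subst {σ : ℕ → Ty} {A : Ty} {x : ℕ} (h : Unguarded x (Ty.subst σ A)) :
    ∃ n, Unguarded n A ∧ Unguarded x (σ n) := by
  induction A generalizing σ x with
  | var n => exact ⟨n, rfl, h⟩
  | box A _ => exact h.elim
  | arrow A B ihA ihB =>
    obtain ⟨htop, hA | hB⟩ := h
    · obtain ⟨n, hn, hu⟩ := ihA hA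
      exact ⟨n, ⟨fun hB => htop (tailShape_subst_of_eq_top σ hB), Or.inl hn⟩, hu⟩
    · obtain ⟨n, hn, hu⟩ := ihB hB
      exact ⟨n, ⟨fun hB => htop (tailShape_subst_of_eq_top σ hB), Or.inr hn⟩, hu⟩
  | mu A ih =>
    obtain ⟨htop, hA⟩ := h
    obtain ⟨_ | m, hn, hu⟩ := ih hA
    · exact absurd hu (by simp [Unguarded])
    · obtain ⟨z, hz, hu'⟩ := Unguarded.of_rename hu
      obtain rfl : z = x := Nat.succ_injective hz
      exact ⟨m, ⟨fun hmu => htop (tailShape_subst_of_eq_top σ hmu), hn⟩, hu'⟩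

theorem Unguarded.of_tailShape_eq_var {A : Ty} {j : ℕ} (h : tailShape A = .var j 0) :
    Unguarded j A := by
  induction A generalizing j with
  | var n => cases h; rfl
  | box A _ =>
    rw [tailShape] at h
    cases hA : tailShape A <;> simp [hA, TailShape.addBullets] at h
  | arrow A B _ ihB =>
    replace h : tailShape B = .var j 0 := h
    exact ⟨by simp [h], Or.inr (ihB h)⟩
  | mu A ih =>
    rw [tailShape] at h
    rcases hA : tailShape A with _ | _ | ⟨_ | j', _ | k⟩ <;>
      simp [hA, TailShape.closeMu] at h
    subst h
    exact ⟨by rw [tailShape, hA]; simp [TailShape.closeMu], ih hA⟩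

/-- What a type becomes once its leading `μ`s are unfolded: a type constructor (`node`), a free
variable, or nothing at all (`loop`, as for `μX.X`). -/
inductive Head : Type
  | loop
  | node
  | var (j : ℕ)

namespace Head

def map (f : ℕ → ℕ) : Head → Head
  | var j => var (f j)
  | h => h

def bind : Head → (ℕ → Head) → Head
  | var j, g => g j
  | h, _ => h

def closeMu : Head → Head
  | var 0 => loop
  | var (j + 1) => var j
  | h => h

end Head

def head : Ty → Head
  | .var j => .var j
  | .mu A => (head A).closeMu
  | _ => .node

theorem head_rename (f : ℕ → ℕ) (A : Ty) : head (Ty.rename f A) = (head A).map f := by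
  induction A generalizing f with
  | mu A ih =>
    simp only [Ty.rename_mu, head, ih]
    rcases head A with _ | _ | _ | j <;> rfl
  | _ => rfl

theorem head_subst (σ : ℕ → Ty) (A : Ty) : head (Ty.subst σ A) = (head A).bind (head ∘ σ) := by
  induction A generalizing σ with
  | mu A ih =>
    simp only [Ty.subst_mu, head, ih]
    rcases head A with _ | _ | _ | j
    · rfl
    · rfl
    · rfl
    · show (head (Ty.shiftUp (σ j))).closeMu = head (σ j)
      rw [Ty.shiftUp, head_rename]
      cases head (σ j) <;> rfl
  | _ => rfl

theorem head_unfoldMu (A : Ty) : head (unfoldMu A) = head (.mu A) := by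
  rw [unfoldMu_eq, head_subst, head]
  rcases h : head A with _ | _ | _ | j
  · rfl
  · rfl
  · simp [Head.bind, Head.closeMu, scons, head, h]
  · rfl

theorem tailShape_of_head_eq_var {A : Ty} {j : ℕ} (h : head A = .var j) :
    tailShape A = .var j 0 := by
  induction A generalizing j with
  | var n => cases h; rfl
  | mu A ih =>
    rw [head] at h
    rcases hA : head A with _ | _ | _ | j' <;> simp [hA, Head.closeMu] at h
    subst h
    rw [tailShape, ih hA]; rfl
  | _ => cases h

theorem tailShape_of_head_eq_loop {A : Ty} (h : head A = .loop) : tailShape A = .loop 0 := by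
  induction A with
  | mu A ih =>
    rw [head] at h
    rw [tailShape]
    rcases hA : head A with _ | _ | _ | j' <;> simp [hA, Head.closeMu] at h
    · rw [ih hA]; rfl
    · rw [tailShape_of_head_eq_var hA]; rfl
  | _ => cases h

theorem WF.rename {A : Ty} (h : WF A) (f : ℕ → ℕ) : WF (Ty.rename f A) := by
  induction A generalizing f with
  | var n => trivial
  | box A ih => exact ih h f
  | arrow A B ihA ihB => exact ⟨ihA h.1 f, ihB h.2 f⟩
  | mu A ih =>
    refine ⟨ih h.1 _, (proper_iff_not_unguarded _ 0).mpr fun hu => ?_⟩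
    obtain ⟨_ | z, hz, hu⟩ := Unguarded.of_rename hu
    · exact (proper_iff_not_unguarded A 0).mp h.2 hu
    · exact Nat.succ_ne_zero _ hz

theorem WF.subst {A : Ty} (h : WF A) {σ : ℕ → Ty} (hσ : ∀ n, WF (σ n)) : WF (Ty.subst σ A) := by
  induction A generalizing σ with
  | var n => exact hσ n
  | box A ih => exact ih h hσ
  | arrow A B ihA ihB => exact ⟨ihA h.1 hσ, ihB h.2 hσ⟩
  | mu A ih =>
    refine ⟨ih h.1 fun n => ?_, (proper_iff_not_unguarded _ 0).mpr fun hu => ?_⟩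
    · cases n with
      | zero => trivial
      | succ m => exact (hσ m).rename _
    · obtain ⟨_ | m, hn, hu⟩ := Unguarded.of_subst hu
      · exact (proper_iff_not_unguarded A 0).mp h.2 hn
      · obtain ⟨z, hz, _⟩ := Unguarded.of_rename hu
        exact Nat.succ_ne_zero _ hz

theorem WF.unfoldMu {A : Ty} (h : WF (.mu A)) : WF (unfoldMu A) :=
  h.1.subst fun n => by cases n <;> trivial

theorem WF.head_ne_loop {A : Ty} (h : WF A) : head A ≠ .loop := by
  induction A with
  | mu A ih =>
    rw [head]
    rcases hA : head A with _ | _ | _ | j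
    · exact absurd hA (ih h.1)
    · simp [Head.closeMu]
    · exact fun _ => (proper_iff_not_unguarded A 0).mp h.2
        (Unguarded.of_tailShape_eq_var (tailShape_of_head_eq_var hA))
    · simp [Head.closeMu]
  | _ => simp [head]

def unguardedDepth : Ty → ℕ
  | .arrow A B => if tailShape B = .top then 0 else max (unguardedDepth A) (unguardedDepth B) + 1
  | .mu A => if tailShape (.mu A) = .top then 0 else unguardedDepth A + 1
  | _ => 0

theorem unguardedDepth_subst_le {σ : ℕ → Ty} {A : Ty}
    (hσ : ∀ n, Unguarded n A → ∃ m, σ n = .var m) :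
    unguardedDepth (Ty.subst σ A) ≤ unguardedDepth A := by
  induction A generalizing σ with
  | var n =>
    obtain ⟨m, hm⟩ := hσ n rfl
    simp [Ty.subst, hm, unguardedDepth]
  | box A _ => exact le_rfl
  | arrow A B ihA ihB =>
    simp only [Ty.subst, unguardedDepth]
    by_cases hB : tailShape B = .top
    · simp [hB, tailShape_subst_of_eq_top σ hB]
    · have hA' := ihA fun n hn => hσ n ⟨hB, Or.inl hn⟩
      have hB' := ihB fun n hn => hσ n ⟨hB, Or.inr hn⟩
      split_ifs <;> omega
  | mu A ih =>
    by_cases hA : tailShape (.mu A) = .top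
    · have hσA : tailShape (Ty.subst σ (.mu A)) = .top := tailShape_subst_of_eq_top σ hA
      rw [Ty.subst_mu] at hσA ⊢
      simp only [unguardedDepth, hA, hσA, if_true, le_refl]
    · have := @ih (scons (.var 0) (Ty.shiftUp ∘ σ)) fun n hn => by
        cases n with
        | zero => exact ⟨0, rfl⟩
        | succ m =>
          obtain ⟨m', hm'⟩ := hσ m ⟨hA, hn⟩
          exact ⟨m' + 1, by simp [scons, hm', Ty.shiftUp, Ty.rename]⟩
      rw [Ty.subst_mu, unguardedDepth, unguardedDepth, if_neg hA]
      split_ifs <;> omega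

theorem unguardedDepth_unfoldMu_lt {A : Ty} (hA : Proper A 0) (htop : tailShape (.mu A) ≠ .top) :
    unguardedDepth (unfoldMu A) < unguardedDepth (.mu A) := by
  have hle : unguardedDepth (unfoldMu A) ≤ unguardedDepth A :=
    unguardedDepth_subst_le fun n hn => by
      cases n with
      | zero => exact absurd hn ((proper_iff_not_unguarded A 0).mp hA)
      | succ m => exact ⟨m, rfl⟩
  rw [unguardedDepth, if_neg htop]
  omega

/-- `Bisim n A B`: the infinite unfoldings of `A` and `B`, with ⊤-variants collapsed to a leaf
`⊤` and `μ`-loops to a leaf of their own, agree up to depth `n`. -/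
inductive Bisim : ℕ → Ty → Ty → Prop
  | zero (A B : Ty) : Bisim 0 A B
  | top {n : ℕ} {A B : Ty} : tailShape A = .top → tailShape B = .top → Bisim n A B
  | loop {n : ℕ} {A B : Ty} : head A = .loop → head B = .loop → Bisim n A B
  | var {n : ℕ} (j : ℕ) : Bisim n (.var j) (.var j)
  | box {n : ℕ} {A B : Ty} : tailShape A ≠ .top → tailShape B ≠ .top → Bisim n A B →
      Bisim (n + 1) (.box A) (.box B)
  | arrow {n : ℕ} {A₁ A₂ B₁ B₂ : Ty} : tailShape A₂ ≠ .top → tailShape B₂ ≠ .top →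
      Bisim n A₁ B₁ → Bisim n A₂ B₂ → Bisim (n + 1) (.arrow A₁ A₂) (.arrow B₁ B₂)
  | muL {n : ℕ} {A B : Ty} : tailShape (.mu A) ≠ .top → Bisim n (unfoldMu A) B →
      Bisim n (.mu A) B
  | muR {n : ℕ} {A B : Ty} : tailShape (.mu B) ≠ .top → Bisim n A (unfoldMu B) →
      Bisim n A (.mu B)

namespace Bisim

theorem symm {n : ℕ} {A B : Ty} (h : Bisim n A B) : Bisim n B A := by
  induction h with
  | zero => exact .zero _ _
  | top hA hB => exact .top hB hA
  | loop hA hB => exact .loop hB hA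
  | var j => exact .var j
  | box hA hB _ ih => exact .box hB hA ih
  | arrow hA hB _ _ ih₁ ih₂ => exact .arrow hB hA ih₁ ih₂
  | muL hA _ ih => exact .muR hA ih
  | muR hB _ ih => exact .muL hB ih

/-- Agreement at the full depth `n` is needed only where the substituted variable is the head of
`C`: at any other occurrence a constructor has been passed first. -/
theorem subst {n : ℕ} {σ τ : ℕ → Ty} (C : Ty)
    (hhead : ∀ j, head C = .var j → Bisim n (σ j) (τ j))
    (hlt : ∀ j, ∀ k < n, Bisim k (σ j) (τ j))
    (htop : ∀ j, tailShape (σ j) = .top ↔ tailShape (τ j) = .top) :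
    Bisim n (Ty.subst σ C) (Ty.subst τ C) := by
  induction n using Nat.strong_induction_on generalizing C σ τ with
  | _ n IHn =>
  have below : ∀ {σ τ : ℕ → Ty}, (∀ j, ∀ k < n, Bisim k (σ j) (τ j)) →
      (∀ j, tailShape (σ j) = .top ↔ tailShape (τ j) = .top) →
      ∀ k < n, ∀ D, Bisim k (Ty.subst σ D) (Ty.subst τ D) := fun hlt htop k hk D =>
    IHn k hk D (fun j _ => hlt j k hk) (fun j k' hk' => hlt j k' (hk'.trans hk)) htop
  by_cases hσC : tailShape (Ty.subst σ C) = .top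
  · exact .top hσC ((tailShape_subst_eq_top_congr htop C).mp hσC)
  have hτC : tailShape (Ty.subst τ C) ≠ .top := fun h =>
    hσC ((tailShape_subst_eq_top_congr htop C).mpr h)
  induction C generalizing σ τ with
  | var j => exact hhead j rfl
  | box C _ =>
    obtain _ | n := n
    · exact .zero _ _
    · exact .box (fun h => hσC (by simp [Ty.subst, tailShape, h]))
        (fun h => hτC (by simp [Ty.subst, tailShape, h])) (below hlt htop n n.lt_succ_self C)
  | arrow C₁ C₂ _ _ =>
    obtain _ | n := n
    · exact .zero _ _
    · exact .arrow hσC hτC (below hlt htop n n.lt_succ_self C₁)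
        (below hlt htop n n.lt_succ_self C₂)
  | mu C ihC =>
    by_cases hloop : head (.mu C) = .loop
    · exact .loop (by rw [head_subst, hloop]; rfl) (by rw [head_subst, hloop]; rfl)
    simp only [Ty.subst_mu] at hσC hτC ⊢
    refine .muL hσC (.muR hτC ?_)
    rw [unfoldMu_subst, unfoldMu_subst]
    refine ihC (fun j hj => ?_) (fun j k hk => ?_) (fun j => ?_) ?_ ?_
    · obtain _ | j := j
      · exact absurd (by rw [head, hj]; rfl) hloop
      · exact hhead j (by rw [head, hj]; rfl)
    · obtain _ | j := j
      · exact below hlt htop k hk (.mu C)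
      · exact hlt j k hk
    · obtain _ | j := j
      · exact tailShape_subst_eq_top_congr htop (.mu C)
      · exact htop j
    · rwa [← unfoldMu_subst, tailShape_unfoldMu]
    · rwa [← unfoldMu_subst, tailShape_unfoldMu]

theorem refl (n : ℕ) (A : Ty) : Bisim n A A := by
  simpa only [Ty.subst_var] using
    subst (σ := Ty.var) (τ := Ty.var) A (fun j _ => .var j) (fun j _ _ => .var j) (fun _ => .rfl)

theorem tailShape_eq_top {m : ℕ} {A B : Ty} (h : Bisim m A B) (hm : m ≠ 0)
    (hA : tailShape A = .top) : tailShape B = .top := by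
  induction h with
  | zero => exact absurd rfl hm
  | top _ hB => exact hB
  | loop hl _ => simp [tailShape_of_head_eq_loop hl] at hA
  | var j => simp [tailShape] at hA
  | box hA₁ _ _ _ => exact absurd (by simpa [tailShape] using hA) hA₁
  | arrow hA₂ _ _ _ _ _ => exact absurd hA hA₂
  | muL hmu _ _ => exact absurd hA hmu
  | muR _ _ ih => rw [← tailShape_unfoldMu]; exact ih hm hA

theorem head_eq_loop {m : ℕ} {A B : Ty} (h : Bisim m A B) (hm : m ≠ 0)
    (hA : head A = .loop) : head B = .loop := by
  induction h with
  | zero => exact absurd rfl hm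
  | top htop _ => simp [tailShape_of_head_eq_loop hA] at htop
  | loop _ hB => exact hB
  | var j => simp [head] at hA
  | box => simp [head] at hA
  | arrow => simp [head] at hA
  | muL _ _ ih => exact ih hm (by rwa [head_unfoldMu])
  | muR _ _ ih => rw [← head_unfoldMu]; exact ih hm hA

theorem unfoldMu_left {n : ℕ} {A B : Ty} (h : Bisim n (.mu A) B)
    (hA : tailShape (.mu A) ≠ .top) : Bisim n (unfoldMu A) B := by
  generalize hC : Ty.mu A = C at h
  induction h with
  | zero => exact .zero _ _
  | top htop _ => subst hC; exact absurd htop hA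
  | loop hl hB => subst hC; exact .loop (by rwa [head_unfoldMu]) hB
  | muL _ h _ => cases hC; exact h
  | muR hB _ ih => exact .muR hB (ih hC)
  | _ => cases hC

theorem unfoldMu_right {n : ℕ} {A B : Ty} (h : Bisim n A (.mu B))
    (hB : tailShape (.mu B) ≠ .top) : Bisim n A (unfoldMu B) :=
  (h.symm.unfoldMu_left hB).symm

theorem box_trans {n : ℕ} {A B C : Ty} (hA : tailShape A ≠ .top) (hB : tailShape B ≠ .top)
    (ih : ∀ {C'}, Bisim n B C' → Bisim n A C') (h : Bisim (n + 1) (.box B) C) :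
    Bisim (n + 1) (.box A) C := by
  generalize hB' : Ty.box B = B' at h
  generalize hm : n + 1 = m at h
  induction h with
  | zero => cases hm
  | top htop _ => subst hB'; exact absurd (by simpa [tailShape] using htop) hB
  | loop hl _ => subst hB'; cases hl
  | box _ hC h => cases hB'; cases hm; exact .box hA hC (ih h)
  | muR hC _ ih' => exact .muR hC (ih' hB' hm)
  | _ => cases hB'

theorem arrow_trans {n : ℕ} {A₁ A₂ B₁ B₂ C : Ty} (hA : tailShape A₂ ≠ .top)
    (hB : tailShape B₂ ≠ .top) (ih₁ : ∀ {C'}, Bisim n B₁ C' → Bisim n A₁ C')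
    (ih₂ : ∀ {C'}, Bisim n B₂ C' → Bisim n A₂ C') (h : Bisim (n + 1) (.arrow B₁ B₂) C) :
    Bisim (n + 1) (.arrow A₁ A₂) C := by
  generalize hB' : Ty.arrow B₁ B₂ = B' at h
  generalize hm : n + 1 = m at h
  induction h with
  | zero => cases hm
  | top htop _ => subst hB'; exact absurd htop hB
  | loop hl _ => subst hB'; cases hl
  | arrow _ hC h₁ h₂ => cases hB'; cases hm; exact .arrow hA hC (ih₁ h₁) (ih₂ h₂)
  | muR hC _ ih' => exact .muR hC (ih' hB' hm)
  | _ => cases hB'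

theorem trans {n : ℕ} {A B C : Ty} (h₁ : Bisim n A B) (h₂ : Bisim n B C) : Bisim n A C := by
  induction h₁ generalizing C with
  | zero => exact .zero _ _
  | @top n _ _ hA hB =>
    obtain _ | n := n
    · exact .zero _ _
    · exact .top hA (h₂.tailShape_eq_top n.succ_ne_zero hB)
  | @loop n _ _ hA hB =>
    obtain _ | n := n
    · exact .zero _ _
    · exact .loop hA (h₂.head_eq_loop n.succ_ne_zero hB)
  | var => exact h₂
  | box hA hB _ ih => exact box_trans hA hB ih h₂
  | arrow hA hB _ _ ih₁ ih₂ => exact arrow_trans hA hB ih₁ ih₂ h₂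
  | muL hA _ ih => exact .muL hA (ih h₂)
  | muR hB _ ih => exact ih (h₂.unfoldMu_left hB)

theorem box_inv {n : ℕ} {A B : Ty} (h : Bisim (n + 1) (.box A) (.box B))
    (hA : tailShape A ≠ .top) : Bisim n A B := by
  cases h with
  | top htop _ => exact absurd (by simpa [tailShape] using htop) hA
  | loop hl _ => cases hl
  | box _ _ h => exact h

theorem arrow_inv {n : ℕ} {A₁ A₂ B₁ B₂ : Ty} (h : Bisim (n + 1) (.arrow A₁ A₂) (.arrow B₁ B₂))
    (hA : tailShape A₂ ≠ .top) : Bisim n A₁ B₁ ∧ Bisim n A₂ B₂ := by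
  cases h with
  | top htop _ => exact absurd htop hA
  | loop hl _ => cases hl
  | arrow _ _ h₁ h₂ => exact ⟨h₁, h₂⟩

end Bisim

theorem tailShape_eq_mu_of_eq_openT {A C : Ty} (hC : Proper C 0)
    (h : tailShape A = tailShape (openT C A)) : tailShape A = tailShape (.mu C) := by
  rw [openT_eq, tailShape_subst] at h
  rw [tailShape]
  rcases hCs : tailShape C with _ | _ | ⟨_ | j, _ | k⟩ <;>
    simp only [hCs, TailShape.bind, Function.comp, scons, tailShape] at h
  · exact h
  · exact h
  · exact absurd (Unguarded.of_tailShape_eq_var hCs) ((proper_iff_not_unguarded C 0).mp hC)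
  · exact TailShape.eq_top_of_addBullets_eq h.symm
  · exact h
  · simpa [TailShape.addBullets, TailShape.closeMu] using h

/-- `X` is not the head of `C`, so below `μX.C` the equation `A ≅ C[A/X]` is only used under a
constructor, at a smaller depth. -/
theorem Bisim.mu_of_openT {A C : Ty} (hC : Proper C 0) (htail : tailShape A = tailShape (.mu C))
    (h : ∀ n, Bisim n A (openT C A)) (n : ℕ) : Bisim n A (.mu C) := by
  by_cases htop : tailShape (.mu C) = .top
  · exact .top (htail ▸ htop) htop
  induction n using Nat.strong_induction_on with
  | _ n IH =>
  refine .muR htop ((h n).trans ?_)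
  rw [openT_eq, unfoldMu_eq]
  refine Bisim.subst C (fun j hj => ?_) (fun j k hk => ?_) (fun j => ?_)
  · obtain _ | j := j
    · exact absurd (Unguarded.of_tailShape_eq_var (tailShape_of_head_eq_var hj))
        ((proper_iff_not_unguarded C 0).mp hC)
    · exact .var j
  · obtain _ | j := j
    · exact IH k hk
    · exact .var j
  · obtain _ | j := j
    · exact htail ▸ Iff.rfl
    · exact Iff.rfl

def TreeEquiv (A B : Ty) : Prop := tailShape A = tailShape B ∧ ∀ n, Bisim n A B

namespace TreeEquiv

theorem refl (A : Ty) : TreeEquiv A A := ⟨rfl, fun n => .refl n A⟩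

theorem symm {A B : Ty} (h : TreeEquiv A B) : TreeEquiv B A :=
  ⟨h.1.symm, fun n => (h.2 n).symm⟩

theorem trans {A B C : Ty} (h₁ : TreeEquiv A B) (h₂ : TreeEquiv B C) : TreeEquiv A C :=
  ⟨h₁.1.trans h₂.1, fun n => (h₁.2 n).trans (h₂.2 n)⟩

theorem box {A B : Ty} (h : TreeEquiv A B) : TreeEquiv (.box A) (.box B) := by
  refine ⟨by simp only [tailShape, h.1], fun n => ?_⟩
  obtain _ | n := n
  · exact .zero _ _
  by_cases hA : tailShape A = .top
  · exact .top (by simp [tailShape, hA]) (by simp [tailShape, ← h.1, hA])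
  · exact .box hA (h.1 ▸ hA) (h.2 n)

theorem arrow {A₁ A₂ B₁ B₂ : Ty} (h₁ : TreeEquiv A₁ B₁) (h₂ : TreeEquiv A₂ B₂) :
    TreeEquiv (.arrow A₁ A₂) (.arrow B₁ B₂) := by
  refine ⟨h₂.1, fun n => ?_⟩
  obtain _ | n := n
  · exact .zero _ _
  by_cases hA : tailShape A₂ = .top
  · exact .top hA (h₂.1 ▸ hA)
  · exact .arrow hA (h₂.1 ▸ hA) (h₁.2 n) (h₂.2 n)

theorem arrow_top (A : Ty) : TreeEquiv (.arrow A tyTop) tyTop :=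
  ⟨rfl, fun _ => .top rfl rfl⟩

theorem fix (A : Ty) : TreeEquiv (.mu A) (unfoldMu A) := by
  refine ⟨(tailShape_unfoldMu A).symm, fun n => ?_⟩
  by_cases hA : tailShape (.mu A) = .top
  · exact .top hA (by rwa [tailShape_unfoldMu])
  · exact .muL hA (.refl n _)

theorem uniq {A C : Ty} (h : TreeEquiv A (openT C A)) (hC : Proper C 0) :
    TreeEquiv A (.mu C) :=
  have htail := tailShape_eq_mu_of_eq_openT hC h.1
  ⟨htail, Bisim.mu_of_openT hC htail h.2⟩

theorem of_tyEq {A B : Ty} (h : TyEq false A B) : TreeEquiv A B := by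
  generalize hs : false = s at h
  induction h with
  | refl => exact .refl _
  | symm _ ih => exact (ih hs).symm
  | trans _ _ ih₁ ih₂ => exact (ih₁ hs).trans (ih₂ hs)
  | boxCongr _ ih => exact (ih hs).box
  | arrowCongr _ _ ih₁ ih₂ => exact (ih₁ hs).arrow (ih₂ hs)
  | arrowTop => exact arrow_top _
  | fix => exact fix _
  | uniq _ hC ih => exact (ih hs).uniq hC
  | kl => cases hs

end TreeEquiv

namespace Interp

variable {W : Type*} {acc : W → W → Prop} {V : Type*} {ap : V → V → V}
  (sem : Interp W acc V ap)

theorem I_box_congr {A B : Ty} {η : ℕ → W → Set V} {p : W} (hA : WF A) (hB : WF B)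
    (hA' : tailShape A ≠ .top) (hB' : tailShape B ≠ .top)
    (h : ∀ q, acc p q → sem.I A η q = sem.I B η q) :
    sem.I (.box A) η p = sem.I (.box B) η p := by
  rw [sem.I_box A η p hA (by simpa [isTV_iff, tailShape] using hA'),
    sem.I_box B η p hB (by simpa [isTV_iff, tailShape] using hB')]
  ext u
  exact forall₂_congr fun q hq => by rw [h q hq]

theorem I_arrow_congr {A₁ A₂ B₁ B₂ : Ty} {η : ℕ → W → Set V} {p : W}
    (hA : WF (.arrow A₁ A₂)) (hB : WF (.arrow B₁ B₂))
    (hA' : tailShape A₂ ≠ .top) (hB' : tailShape B₂ ≠ .top)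
    (h : ∀ q, Relation.ReflTransGen acc p q →
      sem.I A₁ η q = sem.I B₁ η q ∧ sem.I A₂ η q = sem.I B₂ η q) :
    sem.I (.arrow A₁ A₂) η p = sem.I (.arrow B₁ B₂) η p := by
  rw [sem.I_arrow A₁ A₂ η p hA.1 hA.2 (by simpa [isTV_iff, tailShape] using hA'),
    sem.I_arrow B₁ B₂ η p hB.1 hB.2 (by simpa [isTV_iff, tailShape] using hB')]
  ext u
  exact forall₂_congr fun q hq => by rw [(h q hq).1, (h q hq).2]

def RespectsBisim (p : W) : Prop :=
  ∀ A B, WF A → WF B → (∀ n, Bisim n A B) → ∀ η, sem.I A η p = sem.I B η p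

theorem respectsBisim_of_forall_transGen {p : W}
    (hp : ∀ q, Relation.TransGen acc p q → sem.RespectsBisim q) : sem.RespectsBisim p := by
  intro A B hA hB h η
  induction hN : unguardedDepth A + unguardedDepth B using Nat.strong_induction_on
    generalizing A B with
  | _ N IH =>
  -- the first step of the bisimulation fixes the outer shapes of `A` and `B`
  rcases h 1 with _ | ⟨htA, htB⟩ | ⟨hl, -⟩ | j | @⟨_, A, B, hA₁, hB₁, -⟩ | ⟨hA₂, hB₂, -, -⟩ |
    @⟨_, A, _, hmu, -⟩ | @⟨_, _, B, hmu, -⟩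
  · rw [sem.I_tv _ η p hA ((isTV_iff _).2 htA), sem.I_tv _ η p hB ((isTV_iff _).2 htB)]
  · exact absurd hl hA.head_ne_loop
  · rfl
  · exact sem.I_box_congr hA hB hA₁ hB₁ fun q hq =>
      hp q (.single hq) A B hA hB (fun n => (h (n + 1)).box_inv hA₁) η
  · have hcomp := fun n => (h (n + 1)).arrow_inv hA₂
    simp only [unguardedDepth, if_neg hA₂, if_neg hB₂] at hN
    refine sem.I_arrow_congr hA hB hA₂ hB₂ fun q hq => ?_
    rcases Relation.reflTransGen_iff_eq_or_transGen.mp hq with rfl | hpq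
    · exact ⟨IH _ (by omega) _ _ hA.1 hB.1 (fun n => (hcomp n).1) rfl,
        IH _ (by omega) _ _ hA.2 hB.2 (fun n => (hcomp n).2) rfl⟩
    · exact ⟨hp q hpq _ _ hA.1 hB.1 (fun n => (hcomp n).1) η,
        hp q hpq _ _ hA.2 hB.2 (fun n => (hcomp n).2) η⟩
  · have hlt := unguardedDepth_unfoldMu_lt hA.2 hmu
    rw [sem.I_mu A η p hA (by rwa [isTV_iff])]
    exact IH _ (by omega) _ _ hA.unfoldMu hB (fun n => (h n).unfoldMu_left hmu) rfl
  · have hlt := unguardedDepth_unfoldMu_lt hB.2 hmu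
    rw [sem.I_mu B η p hB (by rwa [isTV_iff])]
    exact IH _ (by omega) _ _ hA hB.unfoldMu (fun n => (h n).unfoldMu_right hmu) rfl

theorem respectsBisim (hwf : ConverselyWF acc) (p : W) : sem.RespectsBisim p :=
  hwf.transGen.induction p fun _ ih =>
    sem.respectsBisim_of_forall_transGen fun q hq => ih q (Relation.transGen_swap.mpr hq)

end Interp

/-- **Soundness of ≅** with respect to well-founded frames. -/
theorem statement3
    (W : Type*) (hW : Nonempty W) (acc : W → W → Prop) (hwf : ConverselyWF acc)
    (V : Type*) (alg : LambdaAlgebra V) (Int : Interp W acc V alg.ap)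
    (A B : Ty) (hA : WF A) (hB : WF B) (hAB : TyEq false A B)
    (η : ℕ → W → Set V) (hη : Hereditary acc η) (p : W) :
    Int.I A η p = Int.I B η p :=
  Int.respectsBisim hwf p A B hA hB (TreeEquiv.of_tyEq hAB).2 η

end LambdaA
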